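/- Let X and Y be real Hilbert spaces, A, V : X → Y bounded linear operators, G : X → ℝ a γ_G-strongly convex function and F* : Y → ℝ a γ_{F*}-strongly convex function, with γ_G · γ_{F*} > (1/4)·‖A − V‖². Then there exists μ > 0 such that for all x, x' ∈ X, y, y' ∈ Y, all subgradients g of G at x and g' of G at x', and all subgradients f of F* at y and f' of F* at y', one has ⟪(g + V*(y)) − (g' + V*(y')), x − x'⟫ + ⟪(f − A(x)) − (f' − A(x')), y − y'⟫ ≥ μ·(‖x − x'‖² + ‖y − y'‖²). -/

import Mathlib

open scoped RealInnerProductSpace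

/-- `g` is a subgradient of `f` at `x`. -/
def IsSubgradientAt {E : Type*} [NormedAddCommGroup E] [InnerProductSpace ℝ E]
    (f : E → ℝ) (g x : E) : Prop :=
  ∀ z, f x + ⟪g, z - x⟫ ≤ f z

/-- `f` is `γ`-strongly convex: `x ↦ f x − (γ/2)‖x‖²` is convex. -/
def IsStronglyConvex {E : Type*} [NormedAddCommGroup E] [InnerProductSpace ℝ E]
    (γ : ℝ) (f : E → ℝ) : Prop :=
  0 < γ ∧ ConvexOn ℝ Set.univ (fun x => f x - γ / 2 * ‖x‖ ^ 2)

/-!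
Subgradients of an `m`-strongly convex function form an `m`-strongly monotone operator, so the
diagonal blocks contribute at least `γ_G ‖x - x'‖² + γ_{F*} ‖y - y'‖²`. Since `V` may differ
from `A`, the off-diagonal blocks no longer cancel; they leave `⟪(V - A)(x - x'), y - y'⟫`,
which is at least `-‖A - V‖ ‖x - x'‖ ‖y - y'‖`. As `‖A - V‖² < 4 γ_G γ_{F*}`, this cross term is
still absorbed by the positive definite form `(γ_G - μ) a² + (γ_{F*} - μ) b²` for every small
enough `μ > 0`.
-/

open Filter Topology Set

section StrongConvexity

variable {E : Type*} [NormedAddCommGroup E] [InnerProductSpace ℝ E]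
  {m : ℝ} {f : E → ℝ} {g g' x x' : E}

theorem IsStronglyConvex.strongConvexOn {γ : ℝ} (hf : IsStronglyConvex γ f) :
    StrongConvexOn univ γ f :=
  strongConvexOn_iff_convex.2 hf.2

/-- Testing the subgradient inequality at `(1 - t) • x + t • z` against strong convexity on the
segment `[x, z]` gives this bound with `m` replaced by `(1 - t) * m`; then let `t → 0`. -/
theorem StrongConvexOn.add_inner_add_le_of_isSubgradientAt (hf : StrongConvexOn univ m f)
    (hg : IsSubgradientAt f g x) (z : E) :
    f x + ⟪g, z - x⟫ + m / 2 * ‖z - x‖ ^ 2 ≤ f z := by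
  have on_segment : ∀ t ∈ Ioo (0 : ℝ) 1,
      ⟪g, z - x⟫ + m / 2 * (1 - t) * ‖z - x‖ ^ 2 ≤ f z - f x := by
    rintro t ⟨ht0, ht1⟩
    have hsub := hg ((1 - t) • x + t • z)
    have hconv := hf.2 (mem_univ x) (mem_univ z) (sub_nonneg.2 ht1.le) ht0.le (by ring)
    rw [show (1 - t) • x + t • z - x = t • (z - x) by module, real_inner_smul_right] at hsub
    rw [smul_eq_mul, smul_eq_mul, norm_sub_rev] at hconv
    have : t * (⟪g, z - x⟫ + m / 2 * (1 - t) * ‖z - x‖ ^ 2) ≤ t * (f z - f x) := by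
      linarith
    exact le_of_mul_le_mul_left this ht0
  have hlim : Tendsto (fun t : ℝ ↦ ⟪g, z - x⟫ + m / 2 * (1 - t) * ‖z - x‖ ^ 2) (𝓝[>] 0)
      (𝓝 (⟪g, z - x⟫ + m / 2 * (1 - 0) * ‖z - x‖ ^ 2)) :=
    (Continuous.tendsto (by fun_prop) 0).mono_left nhdsWithin_le_nhds
  have := le_of_tendsto hlim (eventually_of_mem (Ioo_mem_nhdsGT one_pos) on_segment)
  linarith

theorem StrongConvexOn.mul_sq_norm_sub_le_inner_sub (hf : StrongConvexOn univ m f)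
    (hg : IsSubgradientAt f g x) (hg' : IsSubgradientAt f g' x') :
    m * ‖x - x'‖ ^ 2 ≤ ⟪g - g', x - x'⟫ := by
  have h := hf.add_inner_add_le_of_isSubgradientAt hg x'
  have h' := hf.add_inner_add_le_of_isSubgradientAt hg' x
  rw [← neg_sub x x', inner_neg_right, norm_neg] at h
  rw [inner_sub_left]
  linarith

end StrongConvexity

theorem neg_norm_sub_mul_le_inner_adjoint_sub_inner {X Y : Type*}
    [NormedAddCommGroup X] [InnerProductSpace ℝ X] [CompleteSpace X]
    [NormedAddCommGroup Y] [InnerProductSpace ℝ Y] [CompleteSpace Y]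
    (A V : X →L[ℝ] Y) (u : X) (v : Y) :
    -(‖A - V‖ * ‖u‖ * ‖v‖) ≤ ⟪ContinuousLinearMap.adjoint V v, u⟫ - ⟪A u, v⟫ := by
  have hrewrite : ⟪ContinuousLinearMap.adjoint V v, u⟫ - ⟪A u, v⟫ = -⟪(A - V) u, v⟫ := by
    rw [ContinuousLinearMap.adjoint_inner_left, sub_apply, inner_sub_left,
      real_inner_comm (V u) v]
    ring
  have hbound : ⟪(A - V) u, v⟫ ≤ ‖A - V‖ * ‖u‖ * ‖v‖ :=
    (real_inner_le_norm _ _).trans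
      (mul_le_mul_of_nonneg_right ((A - V).le_opNorm u) (norm_nonneg v))
  linarith

theorem mul_mul_le_of_sq_le_four_mul_mul {p q c : ℝ} (hp : 0 < p) (h : c ^ 2 ≤ 4 * p * q)
    (a b : ℝ) : c * a * b ≤ p * a ^ 2 + q * b ^ 2 := by
  have : 0 ≤ 4 * p * (p * a ^ 2 + q * b ^ 2 - c * a * b) := by
    rw [show 4 * p * (p * a ^ 2 + q * b ^ 2 - c * a * b)
        = (2 * p * a - c * b) ^ 2 + (4 * p * q - c ^ 2) * b ^ 2 by ring]
    exact add_nonneg (sq_nonneg _) (mul_nonneg (sub_nonneg.2 h) (sq_nonneg b))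
  nlinarith

theorem exists_pos_sq_lt_four_mul_sub_mul_sub {p q c : ℝ} (hp : 0 < p) (h : c ^ 2 < 4 * p * q) :
    ∃ μ : ℝ, 0 < μ ∧ μ < p ∧ c ^ 2 < 4 * (p - μ) * (q - μ) := by
  have hcont : Continuous fun μ : ℝ ↦ 4 * (p - μ) * (q - μ) := by fun_prop
  have near_zero : ∀ᶠ μ in 𝓝 (0 : ℝ), μ < p ∧ c ^ 2 < 4 * (p - μ) * (q - μ) :=
    (eventually_lt_nhds hp).and (hcont.continuousAt.eventually_const_lt (by simpa using h))
  exact near_zero.exists_gt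

/-- Strong monotonicity of the mismatched saddle-point operator
`(x, y) ↦ (∂G(x) + V*y, ∂F*(y) − Ax)` when `γ_G γ_{F*} > ‖A − V‖²/4`. -/
theorem pddr_mismatch_operator_strongly_monotone
    {X Y : Type*} [NormedAddCommGroup X] [InnerProductSpace ℝ X] [CompleteSpace X]
    [NormedAddCommGroup Y] [InnerProductSpace ℝ Y] [CompleteSpace Y]
    (A V : X →L[ℝ] Y) (G : X → ℝ) (Fs : Y → ℝ) (γG γFs : ℝ)
    (hG : IsStronglyConvex γG G) (hFs : IsStronglyConvex γFs Fs)
    (hcond : (1 / 4) * ‖A - V‖ ^ 2 < γG * γFs) :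
    ∃ μ : ℝ, 0 < μ ∧
      ∀ (x x' g g' : X) (y y' f f' : Y),
        IsSubgradientAt G g x → IsSubgradientAt G g' x' →
        IsSubgradientAt Fs f y → IsSubgradientAt Fs f' y' →
        μ * (‖x - x'‖ ^ 2 + ‖y - y'‖ ^ 2) ≤
          ⟪(g + (ContinuousLinearMap.adjoint V) y) -
              (g' + (ContinuousLinearMap.adjoint V) y'), x - x'⟫ +
            ⟪(f - A x) - (f' - A x'), y - y'⟫ := by
  obtain ⟨μ, hμ, hμG, hμc⟩ :=
    exists_pos_sq_lt_four_mul_sub_mul_sub hG.1 (by linarith : ‖A - V‖ ^ 2 < 4 * γG * γFs)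
  refine ⟨μ, hμ, fun x x' g g' y y' f f' hg hg' hf hf' ↦ ?_⟩
  have monoG := hG.strongConvexOn.mul_sq_norm_sub_le_inner_sub hg hg'
  have monoFs := hFs.strongConvexOn.mul_sq_norm_sub_le_inner_sub hf hf'
  have cross := neg_norm_sub_mul_le_inner_adjoint_sub_inner A V (x - x') (y - y')
  have absorb := mul_mul_le_of_sq_le_four_mul_mul (sub_pos.2 hμG) hμc.le ‖x - x'‖ ‖y - y'‖
  have split : ⟪(g + ContinuousLinearMap.adjoint V y) - (g' + ContinuousLinearMap.adjoint V y'),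
        x - x'⟫ + ⟪(f - A x) - (f' - A x'), y - y'⟫
      = ⟪g - g', x - x'⟫ + ⟪f - f', y - y'⟫ +
        (⟪ContinuousLinearMap.adjoint V (y - y'), x - x'⟫ - ⟪A (x - x'), y - y'⟫) := by
    simp only [map_sub, inner_sub_left, inner_add_left]
    ring
  rw [split]
  linarith
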